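/- arXiv:2102.02888 — 4 statements merged into one kernel-verified Lean document; each statement's English description precedes it below -/
import Mathlib

section
/- For 1-bit sign compression with scaling, defining C[x] = (‖x‖₁/d) · sign(x) for x ∈ ℝ^d (with sign applied elementwise and sign(0)=1, say), the compression error satisfies ‖x - C[x]‖² = ‖x‖² - ‖x‖₁²/d, which is at most ‖x‖²(1 - 1/d); in particular ‖x - C[x]‖ ≤ ‖x‖. -/
/-!
Since `s` is a sign vector aligned with `x`, `⟪x, s⟫ = ‖x‖₁` and `‖s‖² = d`, so `C[x]` is the
orthogonal projection of `x` onto the line `ℝ s` and Pythagoras gives the error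
`‖x‖² - ⟪x, s⟫² / ‖s‖²`. The bound then only needs `‖x‖ ≤ ‖x‖₁`.
-/

open Finset
open scoped InnerProductSpace

theorem norm_sub_inner_div_norm_sq_smul_sq {F : Type*} [NormedAddCommGroup F]
    [InnerProductSpace ℝ F] (x s : F) :
    ‖x - (⟪x, s⟫_ℝ / ‖s‖ ^ 2) • s‖ ^ 2 = ‖x‖ ^ 2 - ⟪x, s⟫_ℝ ^ 2 / ‖s‖ ^ 2 := by
  rcases eq_or_ne s 0 with rfl | hs
  · simp
  have : ‖s‖ ≠ 0 := norm_ne_zero_iff.mpr hs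
  rw [norm_sub_sq_real, inner_smul_right, norm_smul, mul_pow, Real.norm_eq_abs, sq_abs]
  field_simp
  ring

namespace EuclideanSpace

variable {ι : Type*} [Fintype ι]

theorem norm_sq_eq_card_of_sign (s : EuclideanSpace ℝ ι) (hs : ∀ i, s i = 1 ∨ s i = -1) :
    ‖s‖ ^ 2 = Fintype.card ι := by
  rw [real_norm_sq_eq, Fintype.card_eq_sum_ones, Nat.cast_sum, Nat.cast_one]
  refine sum_congr rfl fun i _ => ?_
  rcases hs i with h | h <;> simp [h]

theorem inner_eq_sum_abs_of_mul_eq_abs (x s : EuclideanSpace ℝ ι) (hsx : ∀ i, s i * x i = |x i|) :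
    ⟪x, s⟫_ℝ = ∑ i, |x i| := by
  simp only [PiLp.inner_apply, RCLike.inner_apply, conj_trivial]
  exact sum_congr rfl fun i _ => hsx i

theorem norm_sq_le_sum_abs_sq (x : EuclideanSpace ℝ ι) : ‖x‖ ^ 2 ≤ (∑ i, |x i|) ^ 2 := by
  rw [real_norm_sq_eq]
  simp_rw [← sq_abs (x _)]
  exact sum_sq_le_sq_sum_of_nonneg fun i _ => abs_nonneg _

end EuclideanSpace

theorem one_bit_compression_error_general
    (d : ℕ) (x s : EuclideanSpace ℝ (Fin d))
    (hs : ∀ i, s i = 1 ∨ s i = -1) (hsx : ∀ i, s i * x i = |x i|) :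
    ‖x - ((∑ i, |x i|) / (d : ℝ)) • s‖ ^ 2 = ‖x‖ ^ 2 - (∑ i, |x i|) ^ 2 / (d : ℝ)
      ∧ ‖x - ((∑ i, |x i|) / (d : ℝ)) • s‖ ^ 2 ≤ ‖x‖ ^ 2 * (1 - 1 / (d : ℝ))
      ∧ ‖x - ((∑ i, |x i|) / (d : ℝ)) • s‖ ≤ ‖x‖ := by
  have hd : (d : ℝ) = ‖s‖ ^ 2 := by
    rw [EuclideanSpace.norm_sq_eq_card_of_sign s hs, Fintype.card_fin]
  have error : ‖x - ((∑ i, |x i|) / (d : ℝ)) • s‖ ^ 2 = ‖x‖ ^ 2 - (∑ i, |x i|) ^ 2 / d := by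
    rw [hd, ← EuclideanSpace.inner_eq_sum_abs_of_mul_eq_abs x s hsx,
      norm_sub_inner_div_norm_sq_smul_sq]
  have l2_le_l1 : ‖x‖ ^ 2 / d ≤ (∑ i, |x i|) ^ 2 / d :=
    div_le_div_of_nonneg_right (EuclideanSpace.norm_sq_le_sum_abs_sq x) d.cast_nonneg
  refine ⟨error, ?_, ?_⟩
  · rw [error, mul_sub, mul_one, mul_one_div]
    linarith
  · refine (pow_le_pow_iff_left₀ (norm_nonneg _) (norm_nonneg x) two_ne_zero).mp ?_
    rw [error]
    exact sub_le_self _ (by positivity)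

/-- The 1-bit sign compressor `C[x] = (‖x‖₁/d)·sign(x)` has compression error
`‖x - C[x]‖² = ‖x‖² - ‖x‖₁²/d ≤ ‖x‖²(1 - 1/d)`, hence `‖x - C[x]‖ ≤ ‖x‖`. -/
theorem one_bit_compression_error
    (d : ℕ) (hd : 0 < d) (x s : EuclideanSpace ℝ (Fin d))
    (hs : ∀ i, s i = 1 ∨ s i = -1) (hsx : ∀ i, s i * x i = |x i|) :
    ‖x - ((∑ i, |x i|) / (d : ℝ)) • s‖ ^ 2 = ‖x‖ ^ 2 - (∑ i, |x i|) ^ 2 / (d : ℝ)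
      ∧ ‖x - ((∑ i, |x i|) / (d : ℝ)) • s‖ ^ 2 ≤ ‖x‖ ^ 2 * (1 - 1 / (d : ℝ))
      ∧ ‖x - ((∑ i, |x i|) / (d : ℝ)) • s‖ ≤ ‖x‖ :=
  one_bit_compression_error_general d x s hs hsx
end

section
/- Under the assumptions of the 1-bit Adam convergence theorem, choosing the learning rate γ = 1/(4L/v_min + σ√(T/n) + ε^{2/3} T^{1/3}/v_min), the bound (2(f(x₀)-f*))/γ + 6γ²L²ε²T/((1-β)² v_min³) + Lγσ²T/(n v_min) + 2γ²L²σ²T/(n(1-β)² v_min²), after dividing by T, is at most a constant (depending only on f(x₀)-f*, L, β, v_min) times (σ/√(nT) + ε^{2/3}/T^{2/3} + 1/T). -/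
set_option maxHeartbeats 800000
lemma one_bit_adam_aux (L σ β vmin Δ a t u w n T D : ℝ)
    (hL : 0 < L) (hσ : 0 ≤ σ) (hβ1 : β < 1) (hv : 0 < vmin) (hΔ : 0 ≤ Δ)
    (ha : 0 ≤ a) (ht : 1 ≤ t) (hu : 1 ≤ u) (hw : 1 ≤ w)
    (hT : T = w ^ 2) (hT3 : T = t ^ 3) (hn : n = u ^ 2)
    (hD : D = 4 * L / vmin + σ * (w / u) + a * t / vmin) :
    (2 * Δ / (1 / D)
      + 6 * (1 / D) ^ 2 * L ^ 2 * a ^ 3 * T / ((1 - β) ^ 2 * vmin ^ 3)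
      + L * (1 / D) * σ ^ 2 * T / (n * vmin)
      + 2 * (1 / D) ^ 2 * L ^ 2 * σ ^ 2 * T / (n * (1 - β) ^ 2 * vmin ^ 2)) / T
    ≤ (8 * Δ * L / vmin + 2 * Δ + L / vmin + L / (2 * (1 - β) ^ 2 * vmin)
        + 2 * Δ / vmin + 6 * L ^ 2 / ((1 - β) ^ 2 * vmin))
      * (σ / (u * w) + a / t ^ 2 + 1 / T) := by
  have hc : 0 < 1 - β := by linarith
  have hc2 : 0 < (1 - β) ^ 2 := by positivity
  have ht0 : 0 < t := by linarith
  have hu0 : 0 < u := by linarith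
  have hw0 : 0 < w := by linarith
  have hT0 : 0 < T := by rw [hT]; positivity
  have hn0 : 0 < n := by rw [hn]; positivity
  have hD0 : 0 < D := by rw [hD]; positivity
  have hD1 : 4 * L / vmin ≤ D := by
    rw [hD]
    have h1 : 0 ≤ σ * (w / u) := by positivity
    have h2 : 0 ≤ a * t / vmin := by positivity
    linarith
  have hD2 : σ * (w / u) ≤ D := by
    rw [hD]
    have h1 : 0 ≤ 4 * L / vmin := by positivity
    have h2 : 0 ≤ a * t / vmin := by positivity
    linarith
  have hD3 : a * t / vmin ≤ D := by
    rw [hD]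
    have h1 : 0 ≤ 4 * L / vmin := by positivity
    have h2 : 0 ≤ σ * (w / u) := by positivity
    linarith
  -- rewrite LHS as a sum of four clean pieces
  have hE : (2 * Δ / (1 / D)
      + 6 * (1 / D) ^ 2 * L ^ 2 * a ^ 3 * T / ((1 - β) ^ 2 * vmin ^ 3)
      + L * (1 / D) * σ ^ 2 * T / (n * vmin)
      + 2 * (1 / D) ^ 2 * L ^ 2 * σ ^ 2 * T / (n * (1 - β) ^ 2 * vmin ^ 2)) / T
      = 2 * Δ * D / T + 6 * L ^ 2 * a ^ 3 / (D ^ 2 * (1 - β) ^ 2 * vmin ^ 3)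
        + L * σ ^ 2 / (D * n * vmin)
        + 2 * L ^ 2 * σ ^ 2 / (D ^ 2 * n * (1 - β) ^ 2 * vmin ^ 2) := by
    field_simp
  rw [hE]
  -- piece 1
  have hB : (w / u) / T = 1 / (u * w) := by
    rw [hT]; field_simp
  have hC : t / T = 1 / t ^ 2 := by
    rw [hT3]; field_simp
  have h1 : 2 * Δ * D / T
      = (8 * Δ * L / vmin) * (1 / T) + (2 * Δ) * (σ / (u * w))
        + (2 * Δ / vmin) * (a / t ^ 2) := by
    calc 2 * Δ * D / T
        = (8 * Δ * L / vmin) * (1 / T) + (2 * Δ * σ) * ((w / u) / T)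
          + (2 * Δ / vmin) * a * (t / T) := by rw [hD]; field_simp; ring
      _ = _ := by rw [hB, hC]; ring
  -- piece 2
  have h2 : 6 * L ^ 2 * a ^ 3 / (D ^ 2 * (1 - β) ^ 2 * vmin ^ 3)
      ≤ (6 * L ^ 2 / ((1 - β) ^ 2 * vmin)) * (a / t ^ 2) := by
    rcases eq_or_lt_of_le ha with h | h
    · rw [← h]; simp
    · have hat : 0 < a * t / vmin := by positivity
      have hsq : (a * t / vmin) ^ 2 ≤ D ^ 2 := by
        apply pow_le_pow_left₀ (le_of_lt hat) hD3
      calc 6 * L ^ 2 * a ^ 3 / (D ^ 2 * (1 - β) ^ 2 * vmin ^ 3)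
          ≤ 6 * L ^ 2 * a ^ 3 / ((a * t / vmin) ^ 2 * (1 - β) ^ 2 * vmin ^ 3) := by
            gcongr
        _ = (6 * L ^ 2 / ((1 - β) ^ 2 * vmin)) * (a / t ^ 2) := by
            field_simp
  -- piece 3
  have h3 : L * σ ^ 2 / (D * n * vmin) ≤ (L / vmin) * (σ / (u * w)) := by
    rcases eq_or_lt_of_le hσ with h | h
    · rw [← h]; simp
    · have hσw : 0 < σ * (w / u) := by positivity
      calc L * σ ^ 2 / (D * n * vmin)
          ≤ L * σ ^ 2 / ((σ * (w / u)) * n * vmin) := by gcongr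
        _ = (L / vmin) * (σ / (u * w)) := by
            rw [hn]; field_simp
  -- piece 4
  have h4 : 2 * L ^ 2 * σ ^ 2 / (D ^ 2 * n * (1 - β) ^ 2 * vmin ^ 2)
      ≤ (L / (2 * (1 - β) ^ 2 * vmin)) * (σ / (u * w)) := by
    rcases eq_or_lt_of_le hσ with h | h
    · rw [← h]; simp
    · have hx : 0 < 4 * L / vmin := by positivity
      have hy : 0 < σ * (w / u) := by positivity
      have hprod : (4 * L / vmin) * (σ * (w / u)) ≤ D ^ 2 := by
        have h' := mul_le_mul hD1 hD2 (le_of_lt hy) (le_of_lt hD0)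
        rw [pow_two]; exact h'
      calc 2 * L ^ 2 * σ ^ 2 / (D ^ 2 * n * (1 - β) ^ 2 * vmin ^ 2)
          ≤ 2 * L ^ 2 * σ ^ 2 / (((4 * L / vmin) * (σ * (w / u))) * n * (1 - β) ^ 2 * vmin ^ 2) := by
            gcongr
        _ = (L / (2 * (1 - β) ^ 2 * vmin)) * (σ / (u * w)) := by
            rw [hn]; field_simp; ring
  -- combine
  have hX : 0 ≤ σ / (u * w) := by positivity
  have hY : 0 ≤ a / t ^ 2 := by positivity
  have hZ : 0 ≤ 1 / T := by positivity
  have e1 : 0 ≤ (2 * Δ / vmin + 6 * L ^ 2 / ((1 - β) ^ 2 * vmin) + 8 * Δ * L / vmin)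
      * (σ / (u * w)) := by positivity
  have e2 : 0 ≤ (2 * Δ + L / vmin + L / (2 * (1 - β) ^ 2 * vmin) + 8 * Δ * L / vmin)
      * (a / t ^ 2) := by positivity
  have e3 : 0 ≤ (2 * Δ + L / vmin + L / (2 * (1 - β) ^ 2 * vmin)
      + 2 * Δ / vmin + 6 * L ^ 2 / ((1 - β) ^ 2 * vmin)) * (1 / T) := by positivity
  rw [h1]
  nlinarith [h2, h3, h4, e1, e2, e3]

/-- Corollary 1: with the learning rate
`γ = 1/(4L/v_min + σ√(T/n) + ε^{2/3}T^{1/3}/v_min)`, the bound of Theorem 1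
divided by `T` is at most a constant (depending only on `Δ = f(x₀) - f*`, `L`,
`β`, `v_min`) times `σ/√(nT) + ε^{2/3}/T^{2/3} + 1/T`. -/
theorem one_bit_adam_corollary_rate
    (L σ ε β vmin Δ : ℝ)
    (hL : 0 < L) (hσ : 0 ≤ σ) (hε : 0 ≤ ε) (hβ : 0 ≤ β ∧ β < 1)
    (hvmin : 0 < vmin) (hΔ : 0 ≤ Δ) :
    ∃ K : ℝ, 0 < K ∧ ∀ n T : ℝ, 1 ≤ n → 1 ≤ T →
      (let γ := 1 / (4 * L / vmin + σ * Real.sqrt (T / n)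
          + ε ^ ((2 : ℝ) / 3) * T ^ ((1 : ℝ) / 3) / vmin);
        (2 * Δ / γ
          + 6 * γ ^ 2 * L ^ 2 * ε ^ 2 * T / ((1 - β) ^ 2 * vmin ^ 3)
          + L * γ * σ ^ 2 * T / (n * vmin)
          + 2 * γ ^ 2 * L ^ 2 * σ ^ 2 * T / (n * (1 - β) ^ 2 * vmin ^ 2)) / T
        ≤ K * (σ / Real.sqrt (n * T) + ε ^ ((2 : ℝ) / 3) / T ^ ((2 : ℝ) / 3)
            + 1 / T)) := by
  refine ⟨8 * Δ * L / vmin + 2 * Δ + L / vmin + L / (2 * (1 - β) ^ 2 * vmin)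
      + 2 * Δ / vmin + 6 * L ^ 2 / ((1 - β) ^ 2 * vmin), ?_, ?_⟩
  · have hc2 : 0 < 1 - β := by linarith [hβ.2]
    have p1 : 0 ≤ 8 * Δ * L / vmin := by positivity
    have p2 : 0 < L / vmin := by positivity
    have p3 : 0 < L / (2 * (1 - β) ^ 2 * vmin) := by positivity
    have p4 : 0 ≤ 2 * Δ / vmin := by positivity
    have p5 : 0 < 6 * L ^ 2 / ((1 - β) ^ 2 * vmin) := by positivity
    linarith
  intro n T hn hT
  simp only []
  have hn0 : 0 < n := by linarith
  have hT0 : 0 < T := by linarith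
  have hsd : Real.sqrt (T / n) = Real.sqrt T / Real.sqrt n := Real.sqrt_div (le_of_lt hT0) n
  have hsm : Real.sqrt (n * T) = Real.sqrt n * Real.sqrt T := Real.sqrt_mul (le_of_lt hn0) T
  have he2 : ε ^ 2 = (ε ^ ((2 : ℝ) / 3)) ^ 3 := by
    rw [← Real.rpow_natCast (ε ^ ((2 : ℝ) / 3)) 3, ← Real.rpow_mul hε, ← Real.rpow_natCast ε 2]
    norm_num
  have ht2 : T ^ ((2 : ℝ) / 3) = (T ^ ((1 : ℝ) / 3)) ^ 2 := by
    rw [← Real.rpow_natCast (T ^ ((1 : ℝ) / 3)) 2, ← Real.rpow_mul (le_of_lt hT0)]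
    norm_num
  rw [hsd, hsm, he2, ht2]
  exact one_bit_adam_aux L σ β vmin Δ (ε ^ ((2 : ℝ) / 3)) (T ^ ((1 : ℝ) / 3))
    (Real.sqrt n) (Real.sqrt T) n T _
    hL hσ hβ.2 hvmin hΔ
    (Real.rpow_nonneg hε _)
    (Real.one_le_rpow hT (by norm_num))
    (by rw [show (1:ℝ) = Real.sqrt 1 by simp]; exact Real.sqrt_le_sqrt hn)
    (by rw [show (1:ℝ) = Real.sqrt 1 by simp]; exact Real.sqrt_le_sqrt hT)
    (by rw [Real.sq_sqrt (le_of_lt hT0)])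
    (by rw [← Real.rpow_natCast (T ^ ((1 : ℝ) / 3)) 3, ← Real.rpow_mul (le_of_lt hT0)]; norm_num)
    (by rw [Real.sq_sqrt (le_of_lt hn0)])
    rfl
end

section
/- If a compression operator C satisfies the bounded-error condition ‖x - C[x]‖ ≤ (1-δ)‖x‖ for some δ ∈ (0,1] and all x, then in the error-compensated recursion e_{t+1} = (m_t + e_t) - C[m_t + e_t] with e_0 = 0, the error norms satisfy ‖e_t‖ ≤ ((1-δ)/δ) max_{s<t} ‖m_s‖ for all t ≥ 1. -/
open Finset in
/-- For a δ-contractive compressor, the error-compensation errors stay bounded: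
`‖e_t‖ ≤ ((1-δ)/δ) · max_{s<t} ‖m_s‖` for all `t ≥ 1`. -/
theorem error_compensation_error_bounded
    (d : ℕ) (C : EuclideanSpace ℝ (Fin d) → EuclideanSpace ℝ (Fin d))
    (δ : ℝ) (hδ : 0 < δ ∧ δ ≤ 1)
    (hC : ∀ x, ‖x - C x‖ ≤ (1 - δ) * ‖x‖)
    (m e : ℕ → EuclideanSpace ℝ (Fin d))
    (he0 : e 0 = 0)
    (he : ∀ t, e (t + 1) = m t + e t - C (m t + e t)) :
    ∀ t, ∀ ht : 1 ≤ t,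
      ‖e t‖ ≤ ((1 - δ) / δ) *
        (Finset.range t).sup' (Finset.nonempty_range_iff.mpr (by omega))
          (fun s => ‖m s‖) := by
  obtain ⟨hδ0, hδ1⟩ := hδ
  intro t
  induction t with
  | zero => intro ht; omega
  | succ t ih =>
    intro _
    have key : ‖e (t + 1)‖ ≤ (1 - δ) * (‖m t‖ + ‖e t‖) := by
      rw [he t]
      calc ‖m t + e t - C (m t + e t)‖ ≤ (1 - δ) * ‖m t + e t‖ := hC _
        _ ≤ (1 - δ) * (‖m t‖ + ‖e t‖) := by
            apply mul_le_mul_of_nonneg_left (norm_add_le _ _) (by linarith)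
    set M := (Finset.range (t + 1)).sup' (Finset.nonempty_range_iff.mpr (by omega))
        (fun s => ‖m s‖) with hM
    have hmtM : ‖m t‖ ≤ M := by
      apply Finset.le_sup' (fun s => ‖m s‖)
      simp
    have hM0 : 0 ≤ M := le_trans (norm_nonneg _) hmtM
    rcases Nat.eq_zero_or_pos t with rfl | ht1
    · have : ‖e 1‖ ≤ (1 - δ) * ‖m 0‖ := by
        have := key; rw [he0] at this; simpa using this
      have hM1 : M = ‖m 0‖ := by simp [hM]
      rw [hM1]
      calc ‖e 1‖ ≤ (1 - δ) * ‖m 0‖ := this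
        _ ≤ ((1 - δ) / δ) * ‖m 0‖ := by
            apply mul_le_mul_of_nonneg_right _ (norm_nonneg _)
            rw [le_div_iff₀ hδ0]
            nlinarith
    · have het : ‖e t‖ ≤ ((1 - δ) / δ) * M := by
        refine le_trans (ih ht1) ?_
        apply mul_le_mul_of_nonneg_left _ (div_nonneg (by linarith) hδ0.le)
        apply Finset.sup'_le
        intro s hs
        apply Finset.le_sup' (fun s => ‖m s‖)
        simp at hs ⊢; omega
      calc ‖e (t + 1)‖ ≤ (1 - δ) * (‖m t‖ + ‖e t‖) := key
        _ ≤ (1 - δ) * (M + ((1 - δ) / δ) * M) := by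
            exact mul_le_mul_of_nonneg_left (add_le_add hmtM het) (by linarith)
        _ = ((1 - δ) / δ) * M := by
            have h : M + (1 - δ) / δ * M = M / δ := by field_simp; ring
            rw [h]; ring
end

section
/- For the 1-bit sign compressor C[x] = (‖x‖₁/d)·sign(x) on ℝ^d, the relative error satisfies ‖x - C[x]‖²/‖x‖² = 1 - ‖x‖₁²/(d‖x‖²) ≤ 1 - 1/d, with equality in the upper bound iff x is supported on a single coordinate, and the error is 0 iff all coordinates of x have equal absolute value. -/
/-!
Since `⟪x, s⟫ = ‖x‖₁` and `‖s‖² = d`, expanding the square gives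
`‖x - C[x]‖² = ‖x‖² - ‖x‖₁² / d`, so everything reduces to comparing `‖x‖₁²` with `‖x‖²`.
For nonnegative reals `∑ aᵢ² ≤ (∑ aᵢ)²`, with equality iff at most one `aᵢ` is nonzero, and
the Lagrange identity `∑ᵢ ∑ⱼ (aᵢ - aⱼ)² = 2 (d ∑ aᵢ² - (∑ aᵢ)²)` shows that
`(∑ aᵢ)² = d ∑ aᵢ²` iff all `aᵢ` agree.
-/

open Finset

section SumSq

variable {ι R : Type*} [CommRing R]

theorem sum_sum_sub_sq (s : Finset ι) (f : ι → R) :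
    ∑ i ∈ s, ∑ j ∈ s, (f i - f j) ^ 2 = 2 * (#s * ∑ i ∈ s, f i ^ 2 - (∑ i ∈ s, f i) ^ 2) := by
  rw [sq (∑ i ∈ s, f i), sum_mul_sum]
  simp only [sub_sq, sum_add_distrib, sum_sub_distrib, sum_const, nsmul_eq_mul, mul_assoc,
    ← mul_sum, ← sum_mul]
  ring

variable [LinearOrder R] [IsStrictOrderedRing R]

theorem card_mul_sum_sq_eq_sq_sum_iff (s : Finset ι) (f : ι → R) :
    #s * ∑ i ∈ s, f i ^ 2 = (∑ i ∈ s, f i) ^ 2 ↔ ∀ i ∈ s, ∀ j ∈ s, f i = f j := by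
  have hsum : ∑ i ∈ s, ∑ j ∈ s, (f i - f j) ^ 2 = 0 ↔ ∀ i ∈ s, ∀ j ∈ s, f i = f j := by
    simp only [sum_eq_zero_iff_of_nonneg (fun _ _ => sum_nonneg fun _ _ => sq_nonneg _),
      sum_eq_zero_iff_of_nonneg (fun _ _ => sq_nonneg _), sq_eq_zero_iff, sub_eq_zero]
  rw [← hsum, sum_sum_sub_sq, mul_eq_zero, sub_eq_zero, or_iff_right two_ne_zero]

theorem sum_sq_eq_sq_sum_iff_of_nonneg [Fintype ι] [Nonempty ι] {f : ι → R}
    (hf : ∀ i, 0 ≤ f i) :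
    ∑ i, f i ^ 2 = (∑ i, f i) ^ 2 ↔ ∃ j, ∀ i, i ≠ j → f i = 0 := by
  classical
  constructor
  · intro h
    by_cases hzero : ∀ i, f i = 0
    · exact ⟨Classical.arbitrary ι, fun i _ => hzero i⟩
    obtain ⟨j, hj⟩ := not_forall.mp hzero
    -- `(∑ f)² - ∑ f i²` is a sum of the nonnegative terms `f i * (∑ f - f i)`.
    have hterms : ∑ i, f i * (∑ k, f k - f i) = 0 := by
      simp only [mul_sub, sum_sub_distrib, ← sum_mul, ← sq]
      exact sub_eq_zero.mpr h.symm
    have hle : ∀ i, 0 ≤ f i * (∑ k, f k - f i) := fun i =>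
      mul_nonneg (hf i) (sub_nonneg.mpr (single_le_sum (fun k _ => hf k) (mem_univ i)))
    have hSj : ∑ k, f k - f j = 0 :=
      (mul_eq_zero.mp ((sum_eq_zero_iff_of_nonneg fun i _ => hle i).mp hterms j
        (mem_univ j))).resolve_left hj
    rw [← add_sum_erase _ _ (mem_univ j), add_sub_cancel_left,
      sum_eq_zero_iff_of_nonneg fun i _ => hf i] at hSj
    exact ⟨j, fun i hi => hSj i (mem_erase.mpr ⟨hi, mem_univ i⟩)⟩
  · rintro ⟨j, hj⟩
    rw [sum_eq_single j (fun i _ hi => by rw [hj i hi, sq, zero_mul]) (by simp),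
      sum_eq_single j (fun i _ hi => hj i hi) (by simp)]

end SumSq

section SignCompressor

variable {ι : Type*} [Fintype ι] {x s : EuclideanSpace ℝ ι}

theorem norm_sq_eq_card_of_sign (hs : ∀ i, s i = 1 ∨ s i = -1) :
    ‖s‖ ^ 2 = Fintype.card ι := by
  rw [EuclideanSpace.real_norm_sq_eq, Fintype.card_eq_sum_ones, Nat.cast_sum]
  refine sum_congr rfl fun i _ => ?_
  rcases hs i with h | h <;> simp [h]

theorem inner_eq_sum_abs_of_sign (hsx : ∀ i, s i * x i = |x i|) :
    inner ℝ x s = ∑ i, |x i| := by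
  simp only [PiLp.inner_apply, RCLike.inner_apply, conj_trivial, hsx]

theorem norm_sub_sign_compress_sq (hs : ∀ i, s i = 1 ∨ s i = -1)
    (hsx : ∀ i, s i * x i = |x i|) :
    ‖x - ((∑ i, |x i|) / Fintype.card ι) • s‖ ^ 2
      = ‖x‖ ^ 2 - (∑ i, |x i|) ^ 2 / Fintype.card ι := by
  rw [norm_sub_sq_real, inner_smul_right, norm_smul, mul_pow, norm_sq_eq_card_of_sign hs,
    inner_eq_sum_abs_of_sign hsx, Real.norm_eq_abs, sq_abs]
  rcases eq_or_ne (Fintype.card ι : ℝ) 0 with hcard | hcard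
  · simp [hcard]
  · field_simp
    ring

end SignCompressor

theorem one_bit_compression_relative_error_general
    (d : ℕ) (x s : EuclideanSpace ℝ (Fin d)) (hx : x ≠ 0)
    (hs : ∀ i, s i = 1 ∨ s i = -1) (hsx : ∀ i, s i * x i = |x i|) :
    ∀ Cx : EuclideanSpace ℝ (Fin d), Cx = ((∑ i, |x i|) / (d : ℝ)) • s →
      ‖x - Cx‖ ^ 2 / ‖x‖ ^ 2 = 1 - (∑ i, |x i|) ^ 2 / ((d : ℝ) * ‖x‖ ^ 2)
      ∧ ‖x - Cx‖ ^ 2 / ‖x‖ ^ 2 ≤ 1 - 1 / (d : ℝ)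
      ∧ (‖x - Cx‖ ^ 2 / ‖x‖ ^ 2 = 1 - 1 / (d : ℝ) ↔
          ∃ j, ∀ i, i ≠ j → x i = 0)
      ∧ (‖x - Cx‖ = 0 ↔ ∀ i j, |x i| = |x j|) := by
  rintro Cx rfl
  obtain ⟨j₀, -⟩ : ∃ j, x j ≠ 0 := by
    by_contra! h
    exact hx (by ext i; exact h i)
  have : Nonempty (Fin d) := ⟨j₀⟩
  have hd : (0 : ℝ) < d := Nat.cast_pos.mpr j₀.pos
  have hNsum : ‖x‖ ^ 2 = ∑ i, |x i| ^ 2 := by simp [EuclideanSpace.real_norm_sq_eq]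
  have herr := norm_sub_sign_compress_sq hs hsx
  rw [Fintype.card_fin] at herr
  have hrel : ‖x - ((∑ i, |x i|) / d) • s‖ ^ 2 / ‖x‖ ^ 2
      = 1 - (∑ i, |x i|) ^ 2 / (d * ‖x‖ ^ 2) := by
    rw [herr]
    field_simp
  refine ⟨hrel, ?_, ?_, ?_⟩
  · have hNL : ‖x‖ ^ 2 ≤ (∑ i, |x i|) ^ 2 :=
      hNsum ▸ sum_sq_le_sq_sum_of_nonneg fun i _ => abs_nonneg _
    rw [hrel, sub_le_sub_iff_left, div_le_div_iff₀ hd (by positivity), one_mul, mul_comm]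
    exact mul_le_mul_of_nonneg_right hNL hd.le
  · rw [hrel, sub_right_inj, div_eq_div_iff (by positivity) hd.ne', one_mul, mul_comm,
      mul_right_inj' hd.ne', eq_comm, hNsum,
      sum_sq_eq_sq_sum_iff_of_nonneg fun i => abs_nonneg _]
    simp only [abs_eq_zero]
  · rw [← pow_eq_zero_iff two_ne_zero, herr, sub_eq_zero, eq_div_iff hd.ne', mul_comm,
      hNsum]
    simpa using card_mul_sum_sq_eq_sq_sum_iff univ fun i => |x i|

/-- Relative error of the 1-bit sign compressor:
`‖x - C[x]‖²/‖x‖² = 1 - ‖x‖₁²/(d‖x‖²) ≤ 1 - 1/d`, with equality in the upper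
bound iff `x` is supported on a single coordinate, and zero error iff all
coordinates have equal absolute value. -/
theorem one_bit_compression_relative_error
    (d : ℕ) (hd : 0 < d) (x s : EuclideanSpace ℝ (Fin d)) (hx : x ≠ 0)
    (hs : ∀ i, s i = 1 ∨ s i = -1) (hsx : ∀ i, s i * x i = |x i|) :
    ∀ Cx : EuclideanSpace ℝ (Fin d), Cx = ((∑ i, |x i|) / (d : ℝ)) • s →
      ‖x - Cx‖ ^ 2 / ‖x‖ ^ 2 = 1 - (∑ i, |x i|) ^ 2 / ((d : ℝ) * ‖x‖ ^ 2)
      ∧ ‖x - Cx‖ ^ 2 / ‖x‖ ^ 2 ≤ 1 - 1 / (d : ℝ)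
      ∧ (‖x - Cx‖ ^ 2 / ‖x‖ ^ 2 = 1 - 1 / (d : ℝ) ↔
          ∃ j, ∀ i, i ≠ j → x i = 0)
      ∧ (‖x - Cx‖ = 0 ↔ ∀ i j, |x i| = |x j|) :=
  one_bit_compression_relative_error_general d x s hx hs hsx
end
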